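/- Bound on the Darcy-defect function Q (equation (3.30)): Under the ODE hypotheses, define Q(t) = (1+t)^{−λ} θ(t)^{nγ−n+2} − (1+t). Then there exists C = C(κ,λ) > 0 such that for all t ≥ 0: |Q(t)| ≤ C ln(1+t) if λ = 0, and |Q(t)| ≤ C (1+t)^λ if λ ∈ (0,1). -/

import Mathlib

/-!
Write `m = nγ - n + 2`, so that `mκ = 1 + λ`, the equation reads
`θ'' + (1 + t)^{-λ} θ' = κ θ^{1-m}` and `Q = (1 + t)^{-λ} (θ^m - (1 + t)^{1+λ})`.
Every estimate is a comparison argument for `y ↦ y' + (1 + t)^{-λ} y`, which has the positive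
integrating factor `exp ∫₀ᵗ (1 + s)^{-λ} ds`. The flux `u = θ^{m-1} θ'` solves
`u' + (1 + t)^{-λ} u = κ + (m - 1) θ^{m-2} θ'^2`, so `u ≥ (1 + t)^λ / m` and
`θ^m ≳ (1 + t)^{1+λ}`; fed back into the equation for `θ'` this gives `θ' ≲ (1 + t)^{κ-1}`
and `θ ≲ (1 + t)^κ`, hence the source term `(m - 1) θ^{m-2} θ'^2` is `O((1 + t)^{λ-1})`.
Then `w = u - κ (1 + t)^λ` solves `w' + (1 + t)^{-λ} w = O((1 + t)^{λ-1})` with `w 0 = 0`, so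
`w = O((1 + t)^{2λ-1})`, and integrating `(θ^m - (1 + t)^{1+λ})' = m w` gives the bound
`O(log (1 + t))` for `λ = 0` and `O((1 + t)^{2λ})` for `λ > 0`.
-/

open Real

noncomputable section

/-- κ = (1+λ)/(nγ−n+2) -/
def kpp (n : ℕ) (γ lam : ℝ) : ℝ := (1 + lam) / ((n : ℝ) * γ - (n : ℝ) + 2)

/-- the hypotheses on the corrected scale factor θ = ν + h. -/
def ThetaODE (n : ℕ) (γ lam : ℝ) (θ : ℝ → ℝ) : Prop :=
  ContDiff ℝ 2 θ ∧ (∀ t : ℝ, 0 ≤ t → 0 < θ t) ∧ θ 0 = 1 ∧ deriv θ 0 = kpp n γ lam ∧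
    ∀ t : ℝ, 0 ≤ t →
      deriv (deriv θ) t + (1 + t) ^ (-lam) * deriv θ t
        = kpp n γ lam * θ t ^ ((n : ℝ) - (n : ℝ) * γ - 1)

/-- the Darcy-defect function Q(t) = (1+t)^{−λ} θ(t)^{nγ−n+2} − (1+t). -/
def Qfun (n : ℕ) (γ lam : ℝ) (θ : ℝ → ℝ) (t : ℝ) : ℝ :=
  (1 + t) ^ (-lam) * θ t ^ ((n : ℝ) * γ - (n : ℝ) + 2) - (1 + t)

theorem hasDerivAt_one_add_rpow {p t : ℝ} (ht : -1 < t) :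
    HasDerivAt (fun s => (1 + s) ^ p) (p * (1 + t) ^ (p - 1)) t := by
  simpa using ((hasDerivAt_id t).const_add 1).rpow_const (p := p)
    (Or.inl (by simp only [id]; linarith))

theorem le_of_hasDerivAt_le {a t : ℝ} {f g f' g' : ℝ → ℝ}
    (hf : ∀ s, a ≤ s → HasDerivAt f (f' s) s) (hg : ∀ s, a ≤ s → HasDerivAt g (g' s) s)
    (ha : f a ≤ g a) (hle : ∀ s, a ≤ s → f' s ≤ g' s) (ht : a ≤ t) : f t ≤ g t := by
  have hd : ∀ s, a ≤ s → HasDerivAt (fun r => g r - f r) (g' s - f' s) s :=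
    fun s hs => (hg s hs).sub (hf s hs)
  have hmono : MonotoneOn (fun r => g r - f r) (Set.Ici a) := by
    refine monotoneOn_of_hasDerivWithinAt_nonneg (f' := fun s => g' s - f' s) (convex_Ici a)
      (fun s hs => (hd s hs).continuousAt.continuousWithinAt) (fun s hs => ?_) (fun s hs => ?_)
    all_goals rw [interior_Ici] at hs
    · exact (hd s hs.le).hasDerivWithinAt
    · exact sub_nonneg.2 (hle s hs.le)
  linarith [hmono Set.self_mem_Ici ht ht]

theorem abs_le_of_hasDerivAt_abs_le {a t : ℝ} {f g f' g' : ℝ → ℝ}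
    (hf : ∀ s, a ≤ s → HasDerivAt f (f' s) s) (hg : ∀ s, a ≤ s → HasDerivAt g (g' s) s)
    (ha : |f a| ≤ g a) (hle : ∀ s, a ≤ s → |f' s| ≤ g' s) (ht : a ≤ t) : |f t| ≤ g t := by
  rw [abs_le] at ha ⊢
  refine ⟨?_, le_of_hasDerivAt_le hf hg ha.2 (fun s hs => (abs_le.1 (hle s hs)).2) ht⟩
  exact le_of_hasDerivAt_le (f := fun s => -g s) (fun s hs => (hg s hs).neg) hf
    (by linarith) (fun s hs => by linarith [abs_le.1 (hle s hs)]) ht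

section Damping

/-- An integrating factor for `y' + (1 + t) ^ (-lam) * y`: its logarithm is
`∫₀ᵗ (1 + s) ^ (-lam) ds`. -/
def dampingFactor (lam t : ℝ) : ℝ := exp (((1 + t) ^ (1 - lam) - 1) / (1 - lam))

variable {lam : ℝ}

theorem dampingFactor_pos (t : ℝ) : 0 < dampingFactor lam t := exp_pos _

theorem dampingFactor_at_zero : dampingFactor lam 0 = 1 := by simp [dampingFactor]

theorem hasDerivAt_dampingFactor (hlam : lam ≠ 1) {t : ℝ} (ht : -1 < t) :
    HasDerivAt (dampingFactor lam) ((1 + t) ^ (-lam) * dampingFactor lam t) t := by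
  have hexp := (((hasDerivAt_one_add_rpow (p := 1 - lam) ht).sub_const 1).div_const
    (1 - lam)).exp
  refine hexp.congr_deriv ?_
  rw [show 1 - lam - 1 = -lam by ring, dampingFactor]
  field_simp [sub_ne_zero.2 (Ne.symm hlam)]

theorem hasDerivAt_dampingFactor_mul (hlam : lam ≠ 1) {t g : ℝ} (ht : -1 < t) {y : ℝ → ℝ}
    (hy : HasDerivAt y (g - (1 + t) ^ (-lam) * y t) t) :
    HasDerivAt (fun s => dampingFactor lam s * y s) (dampingFactor lam t * g) t :=
  ((hasDerivAt_dampingFactor hlam ht).mul hy).congr_deriv (by ring)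

theorem le_of_hasDerivAt_damped (hlam : lam ≠ 1) {y z g h : ℝ → ℝ}
    (hy : ∀ t, 0 ≤ t → HasDerivAt y (g t - (1 + t) ^ (-lam) * y t) t)
    (hz : ∀ t, 0 ≤ t → HasDerivAt z (h t - (1 + t) ^ (-lam) * z t) t)
    (h0 : y 0 ≤ z 0) (hgh : ∀ t, 0 ≤ t → g t ≤ h t) {t : ℝ} (ht : 0 ≤ t) : y t ≤ z t := by
  have hweighted := le_of_hasDerivAt_le
    (fun s hs => hasDerivAt_dampingFactor_mul hlam (by linarith) (hy s hs))
    (fun s hs => hasDerivAt_dampingFactor_mul hlam (by linarith) (hz s hs))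
    (by simpa only [dampingFactor_at_zero, one_mul] using h0)
    (fun s hs => mul_le_mul_of_nonneg_left (hgh s hs) (dampingFactor_pos s).le) ht
  exact le_of_mul_le_mul_left hweighted (dampingFactor_pos t)

theorem abs_le_of_hasDerivAt_damped (hlam : lam ≠ 1) {y z g h : ℝ → ℝ}
    (hy : ∀ t, 0 ≤ t → HasDerivAt y (g t - (1 + t) ^ (-lam) * y t) t)
    (hz : ∀ t, 0 ≤ t → HasDerivAt z (h t - (1 + t) ^ (-lam) * z t) t)
    (h0 : |y 0| ≤ z 0) (hgh : ∀ t, 0 ≤ t → |g t| ≤ h t) {t : ℝ} (ht : 0 ≤ t) :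
    |y t| ≤ z t := by
  rw [abs_le] at h0 ⊢
  refine ⟨?_, le_of_hasDerivAt_damped hlam hy hz h0.2 (fun s hs => (abs_le.1 (hgh s hs)).2)
    ht⟩
  have hneg : ∀ s, 0 ≤ s →
      HasDerivAt (fun r => -z r) (-h s - (1 + s) ^ (-lam) * -z s) s :=
    fun s hs => (hz s hs).neg.congr_deriv (by ring)
  have := le_of_hasDerivAt_damped hlam hneg hy (by linarith)
    (fun s hs => by linarith [abs_le.1 (hgh s hs)]) ht
  linarith

theorem hasDerivAt_const_mul_one_add_rpow_damped (c p : ℝ) {t : ℝ} (ht : -1 < t) :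
    HasDerivAt (fun s => c * (1 + s) ^ p)
      (c * (p * (1 + t) ^ (p - 1) + (1 + t) ^ (p - lam))
        - (1 + t) ^ (-lam) * (c * (1 + t) ^ p)) t := by
  refine ((hasDerivAt_one_add_rpow ht).const_mul c).congr_deriv ?_
  rw [sub_eq_add_neg p lam, rpow_add (by linarith)]
  ring

end Damping

theorem abs_le_of_hasDerivAt_sub_self {y g : ℝ → ℝ} {C : ℝ}
    (hy : ∀ t, 0 ≤ t → HasDerivAt y (g t - y t) t) (hy0 : y 0 = 0)
    (hg : ∀ t, 0 ≤ t → |g t| ≤ C / (1 + t)) {t : ℝ} (ht : 0 ≤ t) :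
    |y t| ≤ 2 * C / (1 + t) := by
  have hC : 0 ≤ C := by simpa using (abs_nonneg _).trans (hg 0 le_rfl)
  have hy' : ∀ s, 0 ≤ s → HasDerivAt y (g s - (1 + s) ^ (-(0 : ℝ)) * y s) s := by
    simpa using hy
  -- a supersolution vanishing at `0`: `z' + z ≥ C / (1 + s)` because `s + 2 e^{-s} ≥ 1`
  have hz : ∀ s, 0 ≤ s → HasDerivAt (fun r => 2 * C * ((1 - exp (-r)) / (1 + r)))
      (2 * C * ((s + exp (-s)) / (1 + s) ^ 2)
        - (1 + s) ^ (-(0 : ℝ)) * (2 * C * ((1 - exp (-s)) / (1 + s)))) s := by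
    intro s hs
    have hne : 1 + s ≠ 0 := by linarith
    refine ((((hasDerivAt_neg s).exp.const_sub 1).div ((hasDerivAt_id s).const_add 1)
      hne).const_mul (2 * C)).congr_deriv ?_
    simp only [id, neg_zero, rpow_zero, one_mul]
    field_simp
    ring
  have hbound : ∀ s, 0 ≤ s → |g s| ≤ 2 * C * ((s + exp (-s)) / (1 + s) ^ 2) := by
    intro s hs
    have hexp : 1 + s ≤ 2 * (s + exp (-s)) := by
      linarith [add_one_le_exp (-s), exp_pos (-s)]
    refine (hg s hs).trans ?_
    rw [div_le_iff₀ (by linarith), mul_div_assoc', div_mul_eq_mul_div,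
      le_div_iff₀ (by positivity)]
    nlinarith [mul_le_mul_of_nonneg_left hexp (mul_nonneg hC (by linarith : (0 : ℝ) ≤ 1 + s))]
  refine (abs_le_of_hasDerivAt_damped (lam := 0) zero_ne_one hy' hz (by simp [hy0]) hbound
    ht).trans ?_
  rw [mul_div_assoc, ← mul_one_div C, ← mul_assoc]
  exact mul_le_mul_of_nonneg_left
    (div_le_div_of_nonneg_right (by linarith [exp_pos (-t)]) (by linarith)) (by positivity)

theorem abs_le_of_hasDerivAt_damped_of_pos {lam C : ℝ} (hlam0 : 0 < lam) (hlam1 : lam < 1)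
    {y g : ℝ → ℝ} (hy : ∀ t, 0 ≤ t → HasDerivAt y (g t - (1 + t) ^ (-lam) * y t) t)
    (hy0 : y 0 = 0) (hg : ∀ t, 0 ≤ t → |g t| ≤ C * (1 + t) ^ (lam - 1)) {t : ℝ} (ht : 0 ≤ t) :
    |y t| ≤ C / min (2 * lam) 1 * (1 + t) ^ (2 * lam - 1) := by
  have hC : 0 ≤ C := by simpa using (abs_nonneg _).trans (hg 0 le_rfl)
  set d := min (2 * lam) 1
  have hd : 0 < d := lt_min (by linarith) one_pos
  have hbound : ∀ s, 0 ≤ s → |g s| ≤ C / d * ((2 * lam - 1) * (1 + s) ^ (2 * lam - 1 - 1)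
      + (1 + s) ^ (2 * lam - 1 - lam)) := by
    intro s hs
    set r := (1 + s) ^ (lam - 1)
    have hr0 : 0 < r := rpow_pos_of_pos (by linarith) _
    have hr1 : r ≤ 1 := rpow_le_one_of_one_le_of_nonpos (by linarith) (by linarith)
    rw [show 2 * lam - 1 - 1 = (lam - 1) + (lam - 1) by ring,
      show 2 * lam - 1 - lam = lam - 1 by ring, rpow_add (by linarith)]
    have key : d * r ≤ (2 * lam - 1) * (r * r) + r := by
      rcases le_or_gt 0 (2 * lam - 1) with h | h
      · nlinarith [min_le_right (2 * lam) 1, mul_nonneg h (mul_nonneg hr0.le hr0.le)]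
      · have hrr : r * r ≤ r := by nlinarith
        nlinarith [min_le_left (2 * lam) 1, mul_le_mul_of_nonpos_left hrr h.le]
    refine (hg s hs).trans ?_
    rw [div_mul_eq_mul_div, le_div_iff₀ hd]
    nlinarith [mul_le_mul_of_nonneg_left key hC]
  exact abs_le_of_hasDerivAt_damped hlam1.ne hy
    (fun s hs => hasDerivAt_const_mul_one_add_rpow_damped (C / d) (2 * lam - 1) (by linarith))
    (by simpa [hy0] using div_nonneg hC hd.le) hbound ht

theorem exists_abs_le_of_hasDerivAt_damped {lam C : ℝ} (hlam0 : 0 ≤ lam) (hlam1 : lam < 1)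
    (hC : 0 < C) {y g : ℝ → ℝ} (hy : ∀ t, 0 ≤ t → HasDerivAt y (g t - (1 + t) ^ (-lam) * y t) t)
    (hy0 : y 0 = 0) (hg : ∀ t, 0 ≤ t → |g t| ≤ C * (1 + t) ^ (lam - 1)) :
    ∃ K > 0, ∀ t, 0 ≤ t → |y t| ≤ K * (1 + t) ^ (2 * lam - 1) := by
  rcases hlam0.eq_or_lt with rfl | hlam0
  · refine ⟨2 * C, by positivity, fun t ht => ?_⟩
    have hinv : ∀ s : ℝ, C * (1 + s) ^ (-1 : ℝ) = C / (1 + s) := by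
      simp [rpow_neg_one, div_eq_mul_inv]
    rw [show (2 : ℝ) * 0 - 1 = -1 by norm_num, mul_assoc, hinv, ← mul_div_assoc]
    refine abs_le_of_hasDerivAt_sub_self (by simpa using hy) hy0 (fun s hs => ?_) ht
    simpa only [zero_sub, hinv] using hg s hs
  · exact ⟨C / min (2 * lam) 1, div_pos hC (lt_min (by linarith) one_pos),
      fun t ht => abs_le_of_hasDerivAt_damped_of_pos hlam0 hlam1 hy hy0 hg ht⟩

theorem abs_le_mul_log_of_hasDerivAt {f f' : ℝ → ℝ} {c : ℝ}
    (hf : ∀ t, 0 ≤ t → HasDerivAt f (f' t) t) (hf0 : f 0 = 0)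
    (hf' : ∀ t, 0 ≤ t → |f' t| ≤ c / (1 + t)) {t : ℝ} (ht : 0 ≤ t) :
    |f t| ≤ c * log (1 + t) := by
  refine abs_le_of_hasDerivAt_abs_le hf (g := fun s => c * log (1 + s))
    (fun s hs => ((((hasDerivAt_id s).const_add 1).log
      (by linarith : (0 : ℝ) < 1 + s).ne').const_mul c).congr_deriv
      (by simp [div_eq_mul_inv])) (by simp [hf0]) hf' ht

theorem abs_le_div_mul_rpow_of_hasDerivAt {f f' : ℝ → ℝ} {c q : ℝ} (hq : 0 < q) (hc : 0 ≤ c)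
    (hf : ∀ t, 0 ≤ t → HasDerivAt f (f' t) t) (hf0 : f 0 = 0)
    (hf' : ∀ t, 0 ≤ t → |f' t| ≤ c * (1 + t) ^ (q - 1)) {t : ℝ} (ht : 0 ≤ t) :
    |f t| ≤ c / q * (1 + t) ^ q := by
  refine abs_le_of_hasDerivAt_abs_le hf (g := fun s => c / q * (1 + s) ^ q)
    (fun s hs => ((hasDerivAt_one_add_rpow (by linarith)).const_mul (c / q)).congr_deriv ?_)
    (by simpa [hf0] using div_nonneg hc hq.le) hf' ht
  field_simp

/-- `m` stands for the paper's `nγ - n + 2`. -/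
structure IsDarcyProfile (m κ lam : ℝ) (θ θ' : ℝ → ℝ) : Prop where
  two_le : 2 ≤ m
  mul_kappa : m * κ = 1 + lam
  lam_nonneg : 0 ≤ lam
  lam_lt_one : lam < 1
  pos : ∀ t, 0 ≤ t → 0 < θ t
  hasDerivAt : ∀ t, 0 ≤ t → HasDerivAt θ (θ' t) t
  hasDerivAt_deriv : ∀ t, 0 ≤ t →
    HasDerivAt θ' (κ * θ t ^ (1 - m) - (1 + t) ^ (-lam) * θ' t) t
  apply_zero : θ 0 = 1
  deriv_zero : θ' 0 = κ

namespace IsDarcyProfile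

variable {m κ lam : ℝ} {θ θ' : ℝ → ℝ} {t : ℝ}

theorem kappa_eq (h : IsDarcyProfile m κ lam θ θ') : κ = (1 + lam) / m := by
  rw [eq_div_iff (by linarith [h.two_le])]
  linarith [h.mul_kappa]

theorem kappa_pos (h : IsDarcyProfile m κ lam θ θ') : 0 < κ := by
  rw [h.kappa_eq]
  exact div_pos (by linarith [h.lam_nonneg]) (by linarith [h.two_le])

theorem kappa_lt_one (h : IsDarcyProfile m κ lam θ θ') : κ < 1 := by
  rw [h.kappa_eq, div_lt_one (by linarith [h.two_le])]
  linarith [h.two_le, h.lam_lt_one]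

theorem deriv_nonneg (h : IsDarcyProfile m κ lam θ θ') (ht : 0 ≤ t) : 0 ≤ θ' t :=
  le_of_hasDerivAt_damped h.lam_lt_one.ne (y := fun _ => 0) (g := fun _ => 0)
    (fun s _ => by simpa using hasDerivAt_const s (0 : ℝ)) h.hasDerivAt_deriv
    (by rw [h.deriv_zero]; exact h.kappa_pos.le)
    (fun s hs => mul_nonneg h.kappa_pos.le (rpow_pos_of_pos (h.pos s hs) _).le) ht

theorem hasDerivAt_flux (h : IsDarcyProfile m κ lam θ θ') (ht : 0 ≤ t) :
    HasDerivAt (fun s => θ s ^ (m - 1) * θ' s)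
      ((m - 1) * θ t ^ (m - 2) * θ' t ^ 2 + κ
        - (1 + t) ^ (-lam) * (θ t ^ (m - 1) * θ' t)) t := by
  refine (((h.hasDerivAt t ht).rpow_const (p := m - 1) (Or.inl (h.pos t ht).ne')).mul
    (h.hasDerivAt_deriv t ht)).congr_deriv ?_
  have hcancel : θ t ^ (m - 1) * θ t ^ (1 - m) = 1 := by
    rw [← rpow_add (h.pos t ht)]; simp
  rw [show m - 1 - 1 = m - 2 by ring]
  linear_combination κ * hcancel

theorem div_le_flux (h : IsDarcyProfile m κ lam θ θ') (ht : 0 ≤ t) :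
    (1 + t) ^ lam / m ≤ θ t ^ (m - 1) * θ' t := by
  rw [div_eq_inv_mul]
  refine le_of_hasDerivAt_damped h.lam_lt_one.ne
    (fun s hs => hasDerivAt_const_mul_one_add_rpow_damped m⁻¹ lam (by linarith))
    (fun s hs => h.hasDerivAt_flux hs) ?_ (fun s hs => ?_) ht
  · simp only [add_zero, one_rpow, mul_one, h.apply_zero, h.deriv_zero, one_mul, h.kappa_eq]
    rw [div_eq_inv_mul]
    exact le_mul_of_one_le_right (inv_nonneg.2 (by linarith [h.two_le]))
      (by linarith [h.lam_nonneg])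
  · have hr : (1 + s) ^ (lam - 1) ≤ 1 :=
      rpow_le_one_of_one_le_of_nonpos (by linarith) (by linarith [h.lam_lt_one])
    have hsource : 0 ≤ (m - 1) * θ s ^ (m - 2) * θ' s ^ 2 :=
      mul_nonneg (mul_nonneg (by linarith [h.two_le]) (rpow_pos_of_pos (h.pos s hs) _).le)
        (sq_nonneg _)
    rw [sub_self, rpow_zero, h.kappa_eq, div_eq_inv_mul]
    have := mul_le_mul_of_nonneg_left hr h.lam_nonneg
    have : 0 ≤ m⁻¹ := inv_nonneg.2 (by linarith [h.two_le])
    nlinarith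

theorem hasDerivAt_rpow (h : IsDarcyProfile m κ lam θ θ') (ht : 0 ≤ t) :
    HasDerivAt (fun s => θ s ^ m) (m * (θ t ^ (m - 1) * θ' t)) t :=
  ((h.hasDerivAt t ht).rpow_const (Or.inl (h.pos t ht).ne')).congr_deriv (by ring)

theorem half_rpow_le_rpow (h : IsDarcyProfile m κ lam θ θ') (ht : 0 ≤ t) :
    (1 + t) ^ (1 + lam) / 2 ≤ θ t ^ m := by
  rw [div_eq_inv_mul]
  refine le_of_hasDerivAt_le (fun s hs => (hasDerivAt_one_add_rpow (by linarith)).const_mul 2⁻¹)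
    (fun s hs => h.hasDerivAt_rpow hs) (by norm_num [h.apply_zero]) (fun s hs => ?_) ht
  have hflux := h.div_le_flux hs
  rw [div_le_iff₀' (by linarith [h.two_le])] at hflux
  rw [add_sub_cancel_left]
  nlinarith [rpow_pos_of_pos (by linarith : (0 : ℝ) < 1 + s) lam, h.lam_lt_one]

theorem rpow_one_sub_le (h : IsDarcyProfile m κ lam θ θ') (ht : 0 ≤ t) :
    θ t ^ (1 - m) ≤ 2 * (1 + t) ^ (κ - 1 - lam) := by
  have hm : 0 < m := by linarith [h.two_le]
  have hlow := rpow_le_rpow_of_nonpos (by positivity) (h.half_rpow_le_rpow ht)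
    (div_nonpos_of_nonpos_of_nonneg (by linarith [h.two_le]) hm.le : (1 - m) / m ≤ 0)
  rw [← rpow_mul (h.pos t ht).le, mul_div_cancel₀ _ hm.ne',
    div_rpow (by positivity) zero_le_two, ← rpow_mul (by linarith),
    show (1 + lam) * ((1 - m) / m) = κ - 1 - lam by
      rw [h.kappa_eq]; field_simp; ring] at hlow
  have htwo : (2 : ℝ) ^ (-1 : ℝ) ≤ 2 ^ ((1 - m) / m) :=
    rpow_le_rpow_of_exponent_le one_le_two (by rw [le_div_iff₀ hm]; linarith)
  rw [rpow_neg_one] at htwo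
  refine hlow.trans ?_
  rw [div_le_iff₀ (by positivity)]
  nlinarith [rpow_pos_of_pos (by linarith : (0 : ℝ) < 1 + t) (κ - 1 - lam)]

theorem deriv_le (h : IsDarcyProfile m κ lam θ θ') (ht : 0 ≤ t) :
    θ' t ≤ 2 * (1 + t) ^ (κ - 1) := by
  refine le_of_hasDerivAt_damped h.lam_lt_one.ne h.hasDerivAt_deriv
    (fun s hs => hasDerivAt_const_mul_one_add_rpow_damped 2 (κ - 1) (by linarith))
    (by norm_num [h.deriv_zero]; linarith [h.kappa_lt_one]) (fun s hs => ?_) ht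
  have hexp : (1 + s) ^ (κ - 1 - 1) ≤ (1 + s) ^ (κ - 1 - lam) :=
    rpow_le_rpow_of_exponent_le (by linarith) (by linarith [h.lam_lt_one])
  have hθ := mul_le_mul_of_nonneg_left (h.rpow_one_sub_le hs) h.kappa_pos.le
  nlinarith [mul_le_mul_of_nonneg_left hexp (by linarith [h.kappa_lt_one] : (0 : ℝ) ≤ 1 - κ)]

theorem le_rpow_kappa (h : IsDarcyProfile m κ lam θ θ') (ht : 0 ≤ t) :
    θ t ≤ (1 + 2 / κ) * (1 + t) ^ κ := by
  have hκ := h.kappa_pos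
  refine le_of_hasDerivAt_le h.hasDerivAt
    (fun s hs => (hasDerivAt_one_add_rpow (by linarith)).const_mul (1 + 2 / κ))
    (by simp [h.apply_zero]; positivity) (fun s hs => (h.deriv_le hs).trans ?_) ht
  rw [← mul_assoc, add_mul, div_mul_cancel₀ _ hκ.ne']
  nlinarith [rpow_pos_of_pos (by linarith : (0 : ℝ) < 1 + s) (κ - 1)]

theorem source_le (h : IsDarcyProfile m κ lam θ θ') (ht : 0 ≤ t) :
    (m - 1) * θ t ^ (m - 2) * θ' t ^ 2
      ≤ 4 * (m - 1) * (1 + 2 / κ) ^ (m - 2) * (1 + t) ^ (lam - 1) := by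
  have h1t : (0 : ℝ) < 1 + t := by linarith
  have hθ : θ t ^ (m - 2) ≤ (1 + 2 / κ) ^ (m - 2) * (1 + t) ^ (κ * (m - 2)) := by
    have := rpow_le_rpow (h.pos t ht).le (h.le_rpow_kappa ht)
      (by linarith [h.two_le] : 0 ≤ m - 2)
    rwa [mul_rpow (by positivity [h.kappa_pos]) (rpow_pos_of_pos h1t _).le, ← rpow_mul h1t.le]
      at this
  have hθ' : θ' t ^ 2 ≤ 4 * ((1 + t) ^ (κ - 1)) ^ 2 := by
    nlinarith [h.deriv_nonneg ht, h.deriv_le ht]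
  have hexp : (1 + t) ^ (κ * (m - 2)) * ((1 + t) ^ (κ - 1)) ^ 2 = (1 + t) ^ (lam - 1) := by
    rw [sq, ← rpow_add h1t, ← rpow_add h1t]
    congr 1
    linear_combination h.mul_kappa
  calc (m - 1) * θ t ^ (m - 2) * θ' t ^ 2
      ≤ (m - 1) * ((1 + 2 / κ) ^ (m - 2) * (1 + t) ^ (κ * (m - 2)))
          * (4 * ((1 + t) ^ (κ - 1)) ^ 2) := by
        have hm1 : 0 ≤ m - 1 := by linarith [h.two_le]
        have hA : 0 < 1 + 2 / κ := by positivity [h.kappa_pos]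
        exact mul_le_mul (mul_le_mul_of_nonneg_left hθ hm1) hθ' (sq_nonneg _)
          (mul_nonneg hm1 (mul_nonneg (rpow_nonneg hA.le _) (rpow_nonneg h1t.le _)))
    _ = 4 * (m - 1) * (1 + 2 / κ) ^ (m - 2)
          * ((1 + t) ^ (κ * (m - 2)) * ((1 + t) ^ (κ - 1)) ^ 2) := by ring
    _ = 4 * (m - 1) * (1 + 2 / κ) ^ (m - 2) * (1 + t) ^ (lam - 1) := by rw [hexp]

theorem hasDerivAt_flux_sub (h : IsDarcyProfile m κ lam θ θ') (ht : 0 ≤ t) :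
    HasDerivAt (fun s => θ s ^ (m - 1) * θ' s - κ * (1 + s) ^ lam)
      ((m - 1) * θ t ^ (m - 2) * θ' t ^ 2 - κ * lam * (1 + t) ^ (lam - 1)
        - (1 + t) ^ (-lam) * (θ t ^ (m - 1) * θ' t - κ * (1 + t) ^ lam)) t :=
  ((h.hasDerivAt_flux ht).sub (hasDerivAt_const_mul_one_add_rpow_damped κ lam
    (by linarith))).congr_deriv (by rw [sub_self, rpow_zero]; ring)

theorem exists_abs_flux_sub_le (h : IsDarcyProfile m κ lam θ θ') :
    ∃ K > 0, ∀ t, 0 ≤ t →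
      |θ t ^ (m - 1) * θ' t - κ * (1 + t) ^ lam| ≤ K * (1 + t) ^ (2 * lam - 1) := by
  set C := 4 * (m - 1) * (1 + 2 / κ) ^ (m - 2)
  have hC : 0 ≤ C := by
    have : 0 < 1 + 2 / κ := by positivity [h.kappa_pos]
    have : 0 ≤ m - 1 := by linarith [h.two_le]
    positivity
  refine exists_abs_le_of_hasDerivAt_damped h.lam_nonneg h.lam_lt_one
    (by positivity : 0 < C + 1)
    (fun t ht => h.hasDerivAt_flux_sub ht) (by simp [h.apply_zero, h.deriv_zero])
    (fun t ht => ?_)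
  have hsource := h.source_le ht
  have hsource0 : 0 ≤ (m - 1) * θ t ^ (m - 2) * θ' t ^ 2 :=
    mul_nonneg (mul_nonneg (by linarith [h.two_le]) (rpow_pos_of_pos (h.pos t ht) _).le)
      (sq_nonneg _)
  have hr : 0 < (1 + t) ^ (lam - 1) := rpow_pos_of_pos (by linarith) _
  have hκlam : κ * lam ≤ 1 := by
    nlinarith [h.kappa_pos, h.kappa_lt_one, h.lam_nonneg, h.lam_lt_one]
  have hκlam0 : 0 ≤ κ * lam := mul_nonneg h.kappa_pos.le h.lam_nonneg
  rw [abs_le]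
  constructor <;> nlinarith

theorem hasDerivAt_rpow_sub (h : IsDarcyProfile m κ lam θ θ') (ht : 0 ≤ t) :
    HasDerivAt (fun s => θ s ^ m - (1 + s) ^ (1 + lam))
      (m * (θ t ^ (m - 1) * θ' t - κ * (1 + t) ^ lam)) t := by
  refine ((h.hasDerivAt_rpow ht).sub (hasDerivAt_one_add_rpow (by linarith))).congr_deriv ?_
  rw [add_sub_cancel_left, ← h.mul_kappa]
  ring

end IsDarcyProfile

theorem isDarcyProfile_of_thetaODE {n : ℕ} {γ lam : ℝ} {θ : ℝ → ℝ} (hγ : 1 ≤ γ)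
    (hlam0 : 0 ≤ lam) (hlam1 : lam < 1) (hθ : ThetaODE n γ lam θ) :
    IsDarcyProfile ((n : ℝ) * γ - n + 2) (kpp n γ lam) lam θ (deriv θ) := by
  obtain ⟨hC2, hpos, hθ0, hD0, hODE⟩ := hθ
  have hm : 2 ≤ (n : ℝ) * γ - n + 2 := by nlinarith [(Nat.cast_nonneg n : (0 : ℝ) ≤ n)]
  have hθ'' : ContDiff ℝ 1 (deriv θ) :=
    (contDiff_succ_iff_deriv.mp (hC2 : ContDiff ℝ (1 + 1) θ)).2.2
  refine ⟨hm, ?_, hlam0, hlam1, hpos, fun t _ => (hC2.differentiable two_ne_zero t).hasDerivAt,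
    fun t ht => ?_, hθ0, hD0⟩
  · rw [kpp, mul_div_cancel₀ _ (by linarith)]
  · refine ((hθ''.differentiable one_ne_zero t).hasDerivAt).congr_deriv ?_
    rw [show 1 - ((n : ℝ) * γ - n + 2) = n - n * γ - 1 by ring]
    linarith [hODE t ht]

theorem Qfun_eq_rpow_neg_mul (n : ℕ) (γ lam : ℝ) (θ : ℝ → ℝ) {t : ℝ} (ht : 0 ≤ t) :
    Qfun n γ lam θ t
      = (1 + t) ^ (-lam) * (θ t ^ ((n : ℝ) * γ - n + 2) - (1 + t) ^ (1 + lam)) := by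
  rw [Qfun, mul_sub, ← rpow_add (by linarith), neg_add_cancel_comm_assoc, rpow_one]

theorem darcy_defect_bound_general
    (n : ℕ) (γ lam : ℝ)
    (hγ : 1 < γ) (hlam0 : 0 ≤ lam) (hlam1 : lam < 1)
    (θ : ℝ → ℝ) (hθ : ThetaODE n γ lam θ) :
    ∃ C : ℝ, 0 < C ∧ ∀ t : ℝ, 0 ≤ t →
      ((lam = 0 → |Qfun n γ lam θ t| ≤ C * Real.log (1 + t)) ∧
       (0 < lam → |Qfun n γ lam θ t| ≤ C * (1 + t) ^ lam)) := by
  have h := isDarcyProfile_of_thetaODE hγ.le hlam0 hlam1 hθ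
  set m := (n : ℝ) * γ - n + 2
  have hm : 0 < m := by linarith [h.two_le]
  obtain ⟨K, hK, hflux⟩ := h.exists_abs_flux_sub_le
  have hbound : ∀ t, 0 ≤ t → |m * (θ t ^ (m - 1) * deriv θ t - kpp n γ lam * (1 + t) ^ lam)|
      ≤ m * K * (1 + t) ^ (2 * lam - 1) := fun t ht => by
    rw [abs_mul, abs_of_pos hm, mul_assoc]
    exact mul_le_mul_of_nonneg_left (hflux t ht) hm.le
  have hzero : θ 0 ^ m - (1 + 0) ^ (1 + lam) = 0 := by simp [h.apply_zero]
  rcases hlam0.eq_or_lt with rfl | hlam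
  · refine ⟨m * K, by positivity, fun t ht => ⟨fun _ => ?_, fun h0 => absurd h0 (lt_irrefl 0)⟩⟩
    rw [Qfun_eq_rpow_neg_mul n γ 0 θ ht, neg_zero, rpow_zero, one_mul]
    refine abs_le_mul_log_of_hasDerivAt (fun s hs => h.hasDerivAt_rpow_sub hs) hzero
      (fun s hs => ?_) ht
    simpa [rpow_neg_one, div_eq_mul_inv] using hbound s hs
  · refine ⟨m * K / (2 * lam), by positivity,
      fun t ht => ⟨fun h0 => absurd h0 hlam.ne', fun _ => ?_⟩⟩
    have hdefect := abs_le_div_mul_rpow_of_hasDerivAt (by positivity) (by positivity)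
      (fun s hs => h.hasDerivAt_rpow_sub hs) hzero hbound ht
    have h1t : (0 : ℝ) < 1 + t := by linarith
    rw [Qfun_eq_rpow_neg_mul n γ lam θ ht, abs_mul, abs_of_pos (rpow_pos_of_pos h1t _)]
    calc (1 + t) ^ (-lam) * |θ t ^ m - (1 + t) ^ (1 + lam)|
        ≤ (1 + t) ^ (-lam) * (m * K / (2 * lam) * (1 + t) ^ (2 * lam)) := by gcongr
      _ = m * K / (2 * lam) * (1 + t) ^ lam := by
        rw [mul_left_comm, ← rpow_add h1t, neg_add_eq_sub, two_mul, add_sub_cancel_right]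

/-- **Equation (3.30)** (bound on the Darcy-defect function): there is C = C(κ,λ) > 0
with |Q(t)| ≤ C ln(1+t) if λ = 0 and |Q(t)| ≤ C (1+t)^λ if λ ∈ (0,1), for all t ≥ 0. -/
theorem darcy_defect_bound
    (n : ℕ) (hn : n = 2 ∨ n = 3) (γ lam : ℝ)
    (hγ : 1 < γ) (hlam0 : 0 ≤ lam) (hlam1 : lam < 1)
    (θ : ℝ → ℝ) (hθ : ThetaODE n γ lam θ) :
    ∃ C : ℝ, 0 < C ∧ ∀ t : ℝ, 0 ≤ t →
      ((lam = 0 → |Qfun n γ lam θ t| ≤ C * Real.log (1 + t)) ∧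
       (0 < lam → |Qfun n γ lam θ t| ≤ C * (1 + t) ^ lam)) :=
  darcy_defect_bound_general n γ lam hγ hlam0 hlam1 θ hθ
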